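/- Let Π ⊆ ℝⁿ be a nonempty closed convex set, x ∈ Π, v ∈ ℝⁿ, and 0 < μ_min ≤ μ ≤ μ̃. Let G ∈ ℝ^{n×n} be symmetric positive semidefinite with spectral norm ‖G‖₂ ≤ c̄, define r := μ[x − proj_Π(x − μ⁻¹v)] and R(y) := μ[y − proj_Π(y − μ⁻¹(G(y − x) + v))], and assume r ≠ 0 and G ⪰ b₁‖r‖^σ I for some b₁ > 0, σ ∈ (0,1/2). If y ∈ ℝⁿ satisfies ‖R(y)‖ ≤ (1/2)‖r‖, then with d := y − x: (1/(4μ̃ + 2c̄))·‖r‖ ≤ ‖d‖ ≤ (3/2)(1 + μ_min⁻¹c̄)·b₁⁻¹·‖r‖^{1−σ}. -/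

import Mathlib

noncomputable section

/-- Identity reinterpretation of a coordinate vector as a point of Euclidean space. -/
def toEuc {n : ℕ} (v : Fin n → ℝ) : EuclideanSpace ℝ (Fin n) := WithLp.toLp 2 v

/-- The Euclidean projection onto a (nonempty closed convex) set `S`. -/
def projCC {n : ℕ} (S : Set (EuclideanSpace ℝ (Fin n))) (w : EuclideanSpace ℝ (Fin n)) :
    EuclideanSpace ℝ (Fin n) :=
  Classical.epsilon (fun y => y ∈ S ∧ ∀ z ∈ S, ‖y - w‖ ≤ ‖z - w‖)

/-!
Write `p` and `q` for the projections defining `r` and `R y`, and `d = y - x`. Since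
`r - R y = μ ((q - p) - d)` and the projection is nonexpansive, `‖r - R y‖ ≤ (2μ + c̄)‖d‖`,
while `‖r - R y‖ ≥ ‖r‖ / 2`: this is the lower bound. For the upper bound, adding the
variational inequalities of `p` and `q` (firm nonexpansiveness) gives
`⟪G d, d⟫ ≤ (‖d‖ + μ⁻¹‖G d‖) ‖r - R y‖ ≤ (1 + μ_min⁻¹ c̄) ‖d‖ · (3/2) ‖r‖`, while the left side
is at least `b₁ ‖r‖^σ ‖d‖²`; as `r ≠ 0` the lower bound forces `d ≠ 0`, so we may divide by
`b₁ ‖r‖^σ ‖d‖`.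
-/

open InnerProductSpace Matrix

section Projection

variable {E : Type*} [NormedAddCommGroup E] [InnerProductSpace ℝ E]

def IsMetricProjection (K : Set E) (P : E → E) : Prop :=
  ∀ w, P w ∈ K ∧ ∀ z ∈ K, ⟪w - P w, z - P w⟫_ℝ ≤ 0

variable {K : Set E} {P : E → E}

theorem IsMetricProjection.inner_sub_sub_nonneg (hP : IsMetricProjection K P) (w₁ w₂ : E) :
    0 ≤ ⟪(w₁ - P w₁) - (w₂ - P w₂), P w₁ - P w₂⟫_ℝ := by
  have h₁ := (hP w₁).2 _ (hP w₂).1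
  have h₂ := (hP w₂).2 _ (hP w₁).1
  rw [← neg_sub (P w₁) (P w₂), inner_neg_right] at h₁
  rw [inner_sub_left]
  linarith

theorem IsMetricProjection.norm_sub_le (hP : IsMetricProjection K P) (w₁ w₂ : E) :
    ‖P w₁ - P w₂‖ ≤ ‖w₁ - w₂‖ := by
  have h := hP.inner_sub_sub_nonneg w₁ w₂
  rw [sub_sub_sub_comm, inner_sub_left, real_inner_self_eq_norm_sq, sub_nonneg] at h
  nlinarith [real_inner_le_norm (w₁ - w₂) (P w₁ - P w₂), norm_nonneg (P w₁ - P w₂),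
    norm_nonneg (w₁ - w₂)]

/-- In the paper's notation `r = naturalResidual P μ v x` and
`R y = naturalResidual P μ (G (y - x) + v) y`. -/
def naturalResidual (P : E → E) (μ : ℝ) (v x : E) : E := μ • (x - P (x - μ⁻¹ • v))

variable {μ : ℝ}

theorem norm_naturalResidual_sub_le (hP : IsMetricProjection K P) (hμ : 0 < μ) (v g x y : E) :
    ‖naturalResidual P μ v x - naturalResidual P μ (g + v) y‖ ≤ 2 * μ * ‖y - x‖ + ‖g‖ := by
  have hproj := hP.norm_sub_le (y - μ⁻¹ • (g + v)) (x - μ⁻¹ • v)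
  set p := P (x - μ⁻¹ • v)
  set q := P (y - μ⁻¹ • (g + v))
  have hw : y - μ⁻¹ • (g + v) - (x - μ⁻¹ • v) = (y - x) - μ⁻¹ • g := by module
  rw [hw] at hproj
  have hqp : ‖q - p‖ ≤ ‖y - x‖ + μ⁻¹ * ‖g‖ := by
    calc ‖q - p‖ ≤ ‖(y - x) - μ⁻¹ • g‖ := hproj
      _ ≤ ‖y - x‖ + ‖μ⁻¹ • g‖ := norm_sub_le _ _
      _ = ‖y - x‖ + μ⁻¹ * ‖g‖ := by rw [norm_smul, Real.norm_of_nonneg (inv_pos.2 hμ).le]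
  calc ‖naturalResidual P μ v x - naturalResidual P μ (g + v) y‖
      = μ * ‖(q - p) - (y - x)‖ := by
        rw [naturalResidual, naturalResidual, ← smul_sub, norm_smul, Real.norm_of_nonneg hμ.le]
        congr 2
        abel
    _ ≤ μ * ((‖y - x‖ + μ⁻¹ * ‖g‖) + ‖y - x‖) := by
        gcongr
        exact (norm_sub_le _ _).trans (by linarith)
    _ = 2 * μ * ‖y - x‖ + ‖g‖ := by field_simp; ring

theorem inner_le_mul_norm_naturalResidual_sub (hP : IsMetricProjection K P) (hμ : 0 < μ)
    (v g x y : E) :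
    ⟪g, y - x⟫_ℝ ≤
      (‖y - x‖ + μ⁻¹ * ‖g‖) * ‖naturalResidual P μ v x - naturalResidual P μ (g + v) y‖ := by
  have hmono := hP.inner_sub_sub_nonneg (x - μ⁻¹ • v) (y - μ⁻¹ • (g + v))
  set a := x - P (x - μ⁻¹ • v)
  set b := y - P (y - μ⁻¹ • (g + v))
  set d := y - x
  have hμinv : 0 ≤ μ⁻¹ := (inv_pos.2 hμ).le
  have hdiff : (x - μ⁻¹ • v - P (x - μ⁻¹ • v)) - (y - μ⁻¹ • (g + v) - P (y - μ⁻¹ • (g + v)))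
      = (a - b) + μ⁻¹ • g := by simp only [a, b]; module
  have hpq : P (x - μ⁻¹ • v) - P (y - μ⁻¹ • (g + v)) = -(d + (a - b)) := by
    simp only [a, b, d]; abel
  rw [hdiff, hpq, inner_neg_right, neg_nonneg] at hmono
  simp only [inner_add_left, inner_add_right, real_inner_smul_left,
    real_inner_self_eq_norm_sq] at hmono
  have hgab : -(‖g‖ * ‖a - b‖) ≤ ⟪g, a - b⟫_ℝ := neg_le_of_abs_le (abs_real_inner_le_norm _ _)
  have habd : -(‖a - b‖ * ‖d‖) ≤ ⟪a - b, d⟫_ℝ := neg_le_of_abs_le (abs_real_inner_le_norm _ _)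
  have hscaled : μ⁻¹ * ⟪g, d⟫_ℝ ≤ ‖a - b‖ * ‖d‖ + μ⁻¹ * (‖g‖ * ‖a - b‖) := by
    nlinarith [mul_le_mul_of_nonneg_left hgab hμinv, sq_nonneg ‖a - b‖]
  calc ⟪g, d⟫_ℝ = μ * (μ⁻¹ * ⟪g, d⟫_ℝ) := by field_simp
    _ ≤ μ * (‖a - b‖ * ‖d‖ + μ⁻¹ * (‖g‖ * ‖a - b‖)) := by gcongr
    _ = (‖d‖ + μ⁻¹ * ‖g‖) * ‖μ • a - μ • b‖ := by
        rw [← smul_sub, norm_smul, Real.norm_of_nonneg hμ.le]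
        field_simp

variable {μ' c : ℝ} {v g x y : E}

theorem norm_naturalResidual_le_of_norm_le_half (hP : IsMetricProjection K P) (hμ : 0 < μ)
    (hμμ' : μ ≤ μ') (hg : ‖g‖ ≤ c * ‖y - x‖)
    (hs : ‖naturalResidual P μ (g + v) y‖ ≤ 1 / 2 * ‖naturalResidual P μ v x‖) :
    ‖naturalResidual P μ v x‖ ≤ (4 * μ' + 2 * c) * ‖y - x‖ := by
  have := norm_naturalResidual_sub_le hP hμ v g x y
  nlinarith [norm_sub_norm_le (naturalResidual P μ v x) (naturalResidual P μ (g + v) y),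
    norm_nonneg (y - x)]

theorem inner_le_of_norm_naturalResidual_le_half (hP : IsMetricProjection K P)
    {μ₀ : ℝ} (hμ₀ : 0 < μ₀) (hμ₀μ : μ₀ ≤ μ) (hg : ‖g‖ ≤ c * ‖y - x‖)
    (hs : ‖naturalResidual P μ (g + v) y‖ ≤ 1 / 2 * ‖naturalResidual P μ v x‖) :
    ⟪g, y - x⟫_ℝ ≤ 3 / 2 * (1 + μ₀⁻¹ * c) * ‖y - x‖ * ‖naturalResidual P μ v x‖ := by
  have hμ : 0 < μ := hμ₀.trans_le hμ₀μ
  set r := naturalResidual P μ v x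
  set s := naturalResidual P μ (g + v) y
  have hfac : ‖y - x‖ + μ⁻¹ * ‖g‖ ≤ (1 + μ₀⁻¹ * c) * ‖y - x‖ := by
    nlinarith [mul_le_mul_of_nonneg_right (inv_anti₀ hμ₀ hμ₀μ) (norm_nonneg g),
      mul_le_mul_of_nonneg_left hg (inv_pos.2 hμ₀).le]
  have hrs : ‖r - s‖ ≤ 3 / 2 * ‖r‖ := by linarith [norm_sub_le r s]
  calc ⟪g, y - x⟫_ℝ ≤ (‖y - x‖ + μ⁻¹ * ‖g‖) * ‖r - s‖ :=
        inner_le_mul_norm_naturalResidual_sub hP hμ v g x y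
    _ ≤ ((1 + μ₀⁻¹ * c) * ‖y - x‖) * (3 / 2 * ‖r‖) :=
        mul_le_mul hfac hrs (norm_nonneg _) (le_trans (by positivity) hfac)
    _ = 3 / 2 * (1 + μ₀⁻¹ * c) * ‖y - x‖ * ‖r‖ := by ring

end Projection

theorem isMetricProjection_projCC {n : ℕ} {S : Set (EuclideanSpace ℝ (Fin n))}
    (hne : S.Nonempty) (hcl : IsClosed S) (hconv : Convex ℝ S) :
    IsMetricProjection S (projCC S) := by
  intro w
  have : Nonempty S := hne.to_subtype
  have hbdd : BddBelow (Set.range fun z : S => ‖w - z‖) :=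
    ⟨0, by rintro _ ⟨z, rfl⟩; exact norm_nonneg _⟩
  obtain ⟨p, hp, hmin⟩ := exists_norm_eq_iInf_of_complete_convex hne hcl.isComplete hconv w
  have hex : ∃ p ∈ S, ∀ z ∈ S, ‖p - w‖ ≤ ‖z - w‖ := by
    refine ⟨p, hp, fun z hz => ?_⟩
    rw [norm_sub_rev, norm_sub_rev z, hmin]
    exact ciInf_le hbdd ⟨z, hz⟩
  obtain ⟨hmem, hle⟩ := Classical.epsilon_spec hex
  refine ⟨hmem, (norm_eq_iInf_iff_real_inner_le_zero hconv hmem).1 ?_⟩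
  refine le_antisymm (le_ciInf fun z => ?_) (ciInf_le hbdd ⟨_, hmem⟩)
  rw [norm_sub_rev, norm_sub_rev w]
  exact hle z z.2

theorem mul_norm_sq_le_inner_mulVec {ι : Type*} [Fintype ι] [DecidableEq ι]
    {M : Matrix ι ι ℝ} {c : ℝ} (hM : (M - c • (1 : Matrix ι ι ℝ)).PosSemidef)
    (u : EuclideanSpace ℝ ι) :
    c * ‖u‖ ^ 2 ≤ ⟪WithLp.toLp 2 (M *ᵥ u), u⟫_ℝ := by
  have h := hM.dotProduct_mulVec_nonneg u
  rw [sub_mulVec, smul_mulVec, one_mulVec, dotProduct_sub, dotProduct_smul, star_trivial,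
    sub_nonneg] at h
  rw [← real_inner_self_eq_norm_sq, EuclideanSpace.inner_eq_star_dotProduct,
    EuclideanSpace.inner_eq_star_dotProduct]
  simpa [dotProduct_comm] using h

theorem stmt13_general {n : ℕ}
    (Pc : Set (EuclideanSpace ℝ (Fin n))) (hPcne : Pc.Nonempty) (hPccl : IsClosed Pc)
    (hPcconv : Convex ℝ Pc)
    (x : EuclideanSpace ℝ (Fin n))
    (v : EuclideanSpace ℝ (Fin n))
    (μmin μ μtil : ℝ) (hμmin : 0 < μmin) (hμ1 : μmin ≤ μ) (hμ2 : μ ≤ μtil)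
    (G : Matrix (Fin n) (Fin n) ℝ)
    (cbar : ℝ) (hGnorm : ∀ w : Fin n → ℝ, ‖toEuc (G.mulVec w)‖ ≤ cbar * ‖toEuc w‖)
    (b1 σ : ℝ) (hb1 : 0 < b1)
    (r : EuclideanSpace ℝ (Fin n))
    (hrdef : r = μ • (x - projCC Pc (x - μ⁻¹ • v)))
    (hrne : r ≠ 0)
    (hGlb : (G - (b1 * ‖r‖ ^ σ) • (1 : Matrix (Fin n) (Fin n) ℝ)).PosSemidef)
    (R : EuclideanSpace ℝ (Fin n) → EuclideanSpace ℝ (Fin n))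
    (hRdef : ∀ w, R w = μ • (w - projCC Pc (w - μ⁻¹ • (toEuc (G.mulVec (w - x)) + v))))
    (y : EuclideanSpace ℝ (Fin n)) (hy : ‖R y‖ ≤ 1 / 2 * ‖r‖) :
    1 / (4 * μtil + 2 * cbar) * ‖r‖ ≤ ‖y - x‖ ∧
      ‖y - x‖ ≤ 3 / 2 * (1 + μmin⁻¹ * cbar) * b1⁻¹ * ‖r‖ ^ (1 - σ) := by
  have hP := isMetricProjection_projCC hPcne hPccl hPcconv
  have hμ : 0 < μ := hμmin.trans_le hμ1
  have hr : 0 < ‖r‖ := norm_pos_iff.2 hrne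
  set g := toEuc (G *ᵥ (y - x))
  have hg : ‖g‖ ≤ cbar * ‖y - x‖ := hGnorm (y - x)
  have hr' : r = naturalResidual (projCC Pc) μ v x := hrdef
  have hRy : R y = naturalResidual (projCC Pc) μ (g + v) y := hRdef y
  rw [hr', hRy] at hy
  have hlow := norm_naturalResidual_le_of_norm_le_half hP hμ hμ2 hg hy
  rw [← hr'] at hlow
  have hA : 0 < 4 * μtil + 2 * cbar := pos_of_mul_pos_left (hr.trans_le hlow) (norm_nonneg _)
  have hd : 0 < ‖y - x‖ := pos_of_mul_pos_right (hr.trans_le hlow) hA.le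
  have hup := (mul_norm_sq_le_inner_mulVec hGlb (y - x)).trans
    (inner_le_of_norm_naturalResidual_le_half hP hμmin hμ1 hg hy)
  rw [← hr'] at hup
  constructor
  · rw [div_mul_eq_mul_div, one_mul, div_le_iff₀ hA]
    linarith
  · calc ‖y - x‖ = b1 * ‖r‖ ^ σ * ‖y - x‖ ^ 2 / (b1 * ‖r‖ ^ σ * ‖y - x‖) := by field_simp
      _ ≤ 3 / 2 * (1 + μmin⁻¹ * cbar) * ‖y - x‖ * ‖r‖ / (b1 * ‖r‖ ^ σ * ‖y - x‖) := by gcongr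
      _ = 3 / 2 * (1 + μmin⁻¹ * cbar) * b1⁻¹ * ‖r‖ ^ (1 - σ) := by
        rw [Real.rpow_sub hr, Real.rpow_one]
        field_simp

/-- with `r = μ[x − proj_Π(x − μ⁻¹v)] ≠ 0`,
`R(y) = μ[y − proj_Π(y − μ⁻¹(G(y−x) + v))]`, `‖G‖₂ ≤ c̄` (i.e. `‖Gw‖ ≤ c̄‖w‖` for all `w`)
and `G ⪰ b₁‖r‖^σ I`, if `‖R(y)‖ ≤ (1/2)‖r‖` then, with `d = y − x`,
`(1/(4μ̃ + 2c̄))‖r‖ ≤ ‖d‖ ≤ (3/2)(1 + μ_min⁻¹c̄)b₁⁻¹‖r‖^{1−σ}`. -/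
theorem stmt13 {n : ℕ}
    (Pc : Set (EuclideanSpace ℝ (Fin n))) (hPcne : Pc.Nonempty) (hPccl : IsClosed Pc)
    (hPcconv : Convex ℝ Pc)
    (x : EuclideanSpace ℝ (Fin n)) (hx : x ∈ Pc)
    (v : EuclideanSpace ℝ (Fin n))
    (μmin μ μtil : ℝ) (hμmin : 0 < μmin) (hμ1 : μmin ≤ μ) (hμ2 : μ ≤ μtil)
    (G : Matrix (Fin n) (Fin n) ℝ) (hGsym : G.IsSymm) (hGpsd : G.PosSemidef)
    (cbar : ℝ) (hGnorm : ∀ w : Fin n → ℝ, ‖toEuc (G.mulVec w)‖ ≤ cbar * ‖toEuc w‖)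
    (b1 σ : ℝ) (hb1 : 0 < b1) (hσ : 0 < σ ∧ σ < 1 / 2)
    (r : EuclideanSpace ℝ (Fin n))
    (hrdef : r = μ • (x - projCC Pc (x - μ⁻¹ • v)))
    (hrne : r ≠ 0)
    (hGlb : (G - (b1 * ‖r‖ ^ σ) • (1 : Matrix (Fin n) (Fin n) ℝ)).PosSemidef)
    (R : EuclideanSpace ℝ (Fin n) → EuclideanSpace ℝ (Fin n))
    (hRdef : ∀ w, R w = μ • (w - projCC Pc (w - μ⁻¹ • (toEuc (G.mulVec (w - x)) + v))))
    (y : EuclideanSpace ℝ (Fin n)) (hy : ‖R y‖ ≤ 1 / 2 * ‖r‖) :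
    1 / (4 * μtil + 2 * cbar) * ‖r‖ ≤ ‖y - x‖ ∧
      ‖y - x‖ ≤ 3 / 2 * (1 + μmin⁻¹ * cbar) * b1⁻¹ * ‖r‖ ^ (1 - σ) :=
  stmt13_general Pc hPcne hPccl hPcconv x v μmin μ μtil hμmin hμ1 hμ2 G cbar hGnorm b1 σ hb1 r hrdef
    hrne hGlb R hRdef y hy

end
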